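/- Let V be a chordal symmetric sparsity pattern of order p containing all diagonal entries, with cliques β_1,...,β_l. Then the cone of positive semidefinite matrices with sparsity pattern V equals the set of sums ∑_{k=1}^l E_{β_k}^T S̃_k E_{β_k} where each S̃_k is a |β_k| × |β_k| positive semidefinite matrix. That is, every positive semidefinite matrix S ∈ S^p_V decomposes as a sum of positive semidefinite matrices each supported on a single clique block β_k × β_k. -/

import Mathlib

/-- A graph is chordal if every cycle of length greater than three has a chord,
i.e. an edge of the graph joining two vertices of the cycle that is not an edge
of the cycle. -/
def Chordal {p : ℕ} (G : SimpleGraph (Fin p)) : Prop :=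
  ∀ (v : Fin p) (w : G.Walk v v), w.IsCycle → 3 < w.length →
    ∃ a b : Fin p, a ∈ w.support ∧ b ∈ w.support ∧ G.Adj a b ∧ s(a, b) ∉ w.edges

/-- A maximal clique of a graph. -/
def IsMaxClique {p : ℕ} (G : SimpleGraph (Fin p)) (s : Finset (Fin p)) : Prop :=
  G.IsClique (s : Set (Fin p)) ∧
    ∀ t : Finset (Fin p), G.IsClique (t : Set (Fin p)) → s ⊆ t → s = t

/-- The sparsity graph `G_V` of a symmetric sparsity pattern `V`. -/
def spGraph {p : ℕ} (V : Set (Fin p × Fin p))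
    (hs : ∀ i j, (i, j) ∈ V → (j, i) ∈ V) : SimpleGraph (Fin p) where
  Adj i j := i ≠ j ∧ (i, j) ∈ V
  symm := ⟨fun i j h => ⟨h.1.symm, hs i j h.2⟩⟩
  loopless := ⟨fun _ h => h.1 rfl⟩

/-- Embedding of a matrix indexed by a clique `β` into the `β × β` principal block of a
`p × p` matrix (`E_βᵀ Y E_β`). -/
def cliqueEmbed {p : ℕ} (β : Finset (Fin p))
    (Y : Matrix {a // a ∈ β} {a // a ∈ β} ℝ) : Matrix (Fin p) (Fin p) ℝ :=
  fun i j => if hi : i ∈ β then (if hj : j ∈ β then Y ⟨i, hi⟩ ⟨j, hj⟩ else 0) else 0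

/-!
Every nonempty vertex set `A` of a chordal graph contains a vertex that is simplicial in the
subgraph induced on `A` (Dirac). Let `v` be simplicial for the support of a positive semidefinite
`S` with the given pattern. One step of symmetric Gaussian elimination at `v` writes
`S = S eᵥ eᵥᵀ S / S_vv + (Schur complement)`: the first term is positive semidefinite and supported
on the clique `{v} ∪ N(v)`, hence on some maximal clique `β_k`, and the Schur complement is positive
semidefinite with the same pattern on one vertex fewer. Induction on the support gives the
decomposition; conversely each `β_k` is a clique and `V` contains the diagonal.
-/

namespace SimpleGraph

variable {V : Type*} (G : SimpleGraph V)

/-- Unlike `G.induce s`, this keeps the vertex type, so walks transfer to `G` without coercions. -/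
def restrict (s : Set V) : SimpleGraph V where
  Adj i j := G.Adj i j ∧ i ∈ s ∧ j ∈ s
  symm := ⟨fun _ _ h => ⟨h.1.symm, h.2.2, h.2.1⟩⟩
  loopless := ⟨fun _ h => G.loopless.irrefl _ h.1⟩

variable {G}

theorem restrict_le (s : Set V) : G.restrict s ≤ G := fun _ _ h => h.1

theorem restrict_mono {s t : Set V} (h : s ⊆ t) : G.restrict s ≤ G.restrict t :=
  fun _ _ hadj => ⟨hadj.1, h hadj.2.1, h hadj.2.2⟩

theorem Walk.support_subset_of_restrict {s : Set V} {u v : V} (P : (G.restrict s).Walk u v)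
    (hu : u ∈ s) : ∀ z ∈ P.support, z ∈ s := by
  induction P with
  | nil => simpa using hu
  | cons h _ ih => simpa [hu] using ih h.2.2

theorem Reachable.mem_of_restrict {s : Set V} {u v : V} (h : (G.restrict s).Reachable u v)
    (hu : u ∈ s) : v ∈ s :=
  h.elim fun P => P.support_subset_of_restrict hu v P.end_mem_support

theorem Walk.mem_edges_of_length_eq_one {u v : V} (P : G.Walk u v) (h : P.length = 1) :
    s(u, v) ∈ P.edges := by
  cases P with
  | nil => simp at h
  | cons _ P' => cases P' with
    | nil => simp
    | cons => simp at h

theorem Walk.exists_isSubwalk_of_mem_support [DecidableEq V] {u v c d : V} (P : G.Walk u v)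
    (hc : c ∈ P.support) (hd : d ∈ P.support) :
    (∃ Q : G.Walk c d, Q.IsSubwalk P) ∨ ∃ Q : G.Walk d c, Q.IsSubwalk P := by
  rw [← P.take_spec hc, mem_support_append_iff] at hd
  rcases hd with hd | hd
  · exact .inr ⟨_, ((P.takeUntil c hc).isSubwalk_dropUntil hd).trans (P.isSubwalk_takeUntil hc)⟩
  · exact .inl ⟨_, ((P.dropUntil c hc).isSubwalk_takeUntil hd).trans (P.isSubwalk_dropUntil hc)⟩

theorem Walk.mem_edges_of_length_eq_dist {u v c d : V} {P : G.Walk u v}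
    (hP : P.length = G.dist u v) (hc : c ∈ P.support) (hd : d ∈ P.support) (hcd : G.Adj c d) :
    s(c, d) ∈ P.edges := by
  classical
  rcases P.exists_isSubwalk_of_mem_support hc hd with ⟨Q, hQ⟩ | ⟨Q, hQ⟩
  · have hQ1 : Q.length = 1 := (length_eq_dist_of_subwalk hP hQ).trans (dist_eq_one_iff_adj.mpr hcd)
    exact hQ.edges_subset (Q.mem_edges_of_length_eq_one hQ1)
  · have hQ1 : Q.length = 1 :=
      (length_eq_dist_of_subwalk hP hQ).trans (dist_eq_one_iff_adj.mpr hcd.symm)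
    exact Sym2.eq_swap ▸ hQ.edges_subset (Q.mem_edges_of_length_eq_one hQ1)

theorem Walk.IsPath.isCycle_cons_concat {a x y : V} {P : G.Walk x y} (hP : P.IsPath)
    (ha : a ∉ P.support) (hxy : x ≠ y) (hax : G.Adj a x) (hya : G.Adj y a) :
    (Walk.cons hax (P.concat hya)).IsCycle := by
  rw [Walk.cons_isCycle_iff, Walk.edges_concat]
  refine ⟨hP.concat ha hya, ?_⟩
  simp only [List.concat_eq_append, List.mem_append, List.mem_singleton, not_or]
  refine ⟨fun h => ha (P.fst_mem_support_of_mem_edges h), fun h => ?_⟩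
  rcases Sym2.eq_iff.mp h with ⟨rfl, -⟩ | ⟨-, rfl⟩
  · exact hya.ne rfl
  · exact hxy rfl

def IsSimplicialIn (G : SimpleGraph V) (A : Set V) (v : V) : Prop :=
  G.IsClique (G.neighborSet v ∩ A)

theorem exists_not_adj_of_not_isClique {A K : Set V} (hK : G.IsClique K)
    (hA : ¬ G.IsClique A) :
    ∃ a ∈ A, ∃ b ∈ A, a ≠ b ∧ ¬ G.Adj a b ∧ ∀ k ∈ A ∩ K, k ≠ a → G.Adj a k := by
  by_cases h : ∃ k ∈ A ∩ K, ∃ b ∈ A, k ≠ b ∧ ¬ G.Adj k b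
  · obtain ⟨k, hk, b, hb, hkb, hnadj⟩ := h
    exact ⟨k, hk.1, b, hb, hkb, hnadj, fun k' hk' hne => hK hk.2 hk'.2 hne.symm⟩
  · push Not at h
    obtain ⟨a, ha, b, hb, hab, hnadj⟩ : ∃ a ∈ A, ∃ b ∈ A, a ≠ b ∧ ¬ G.Adj a b := by
      simpa [IsClique, Set.Pairwise] using hA
    exact ⟨a, ha, b, hb, hab, hnadj, fun k hk hka => (h k hk a ha hka).symm⟩

end SimpleGraph

namespace Chordal

variable {p : ℕ} {G : SimpleGraph (Fin p)}

open SimpleGraph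

/-- If `x, y` were not adjacent, a shortest path between them outside the closed neighbourhood of
`a` would close up through `a` to a chordless cycle of length at least 4. -/
theorem adj_of_reachable_restrict (hG : Chordal G) {a x y : Fin p} {D : Set (Fin p)}
    (hD : ∀ d ∈ D, d ≠ a ∧ ¬ G.Adj a d) (hax : G.Adj a x) (hay : G.Adj a y) (hxy : x ≠ y)
    (hreach : (G.restrict (insert x (insert y D))).Reachable x y) : G.Adj x y := by
  by_contra hnxy
  obtain ⟨P, hPpath, hPdist⟩ := hreach.exists_path_of_dist
  have hPsupp := P.support_subset_of_restrict (Set.mem_insert x _)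
  have hP2 : 2 ≤ P.length := by
    have h0 : P.length ≠ 0 := fun h => hxy (Walk.eq_of_length_eq_zero h)
    have h1 : P.length ≠ 1 := fun h => hnxy (Walk.adj_of_length_eq_one h).1
    omega
  have haP : a ∉ P.support := by
    intro ha
    rcases hPsupp a ha with rfl | rfl | ha
    · exact hax.ne rfl
    · exact hay.ne rfl
    · exact (hD a ha).1 rfl
  set P' := P.mapLe (restrict_le _)
  set W := Walk.cons hax (P'.concat hay.symm)
  have hW : W.IsCycle := ((Walk.isPath_mapLe _).mpr hPpath).isCycle_cons_concat
    (by simpa [P'] using haP) hxy hax hay.symm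
  have hWlen : 3 < W.length := by simp [W, P']; omega
  have hPW : ∀ e ∈ P.edges, e ∈ W.edges := fun e he => by simp [W, P', he]
  have haW : ∀ z ∈ P.support, G.Adj a z → s(a, z) ∈ W.edges := by
    intro z hz haz
    rcases hPsupp z hz with rfl | rfl | hzD
    · simp [W]
    · simp [W, Sym2.eq_swap]
    · exact absurd haz (hD z hzD).2
  obtain ⟨c, d, hc, hd, hcd, hcdW⟩ := hG a W hW hWlen
  have hWsupp : ∀ z ∈ W.support, z = a ∨ z ∈ P.support := by
    intro z hz
    simp only [W, P', Walk.support_cons, Walk.support_concat, Walk.support_mapLe_eq_support,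
      List.mem_cons, List.mem_append] at hz
    tauto
  rcases hWsupp c hc with rfl | hcP <;> rcases hWsupp d hd with rfl | hdP
  all_goals first
    | exact G.loopless.irrefl _ hcd
    | exact hcdW (haW _ hdP hcd)
    | exact hcdW (Sym2.eq_swap ▸ haW _ hcP hcd.symm)
    | exact hcdW (hPW _ (Walk.mem_edges_of_length_eq_dist hPdist hcP hdP
        ⟨hcd, hPsupp c hcP, hPsupp d hdP⟩))

theorem isClique_of_adj_of_reachable (hG : Chordal G) {a b : Fin p} {D : Set (Fin p)}
    (hD : ∀ d ∈ D, d ≠ a ∧ ¬ G.Adj a d) (hbD : b ∈ D) :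
    G.IsClique {x | G.Adj a x ∧ ∃ c, (G.restrict D).Reachable b c ∧ G.Adj x c} := by
  rintro x ⟨hax, cx, hbcx, hxcx⟩ y ⟨hay, cy, hbcy, hycy⟩ hxy
  refine hG.adj_of_reachable_restrict hD hax hay hxy ?_
  have hD : D ⊆ insert x (insert y D) := (Set.subset_insert y D).trans (Set.subset_insert x _)
  have hx : (G.restrict (insert x (insert y D))).Adj x cx :=
    ⟨hxcx, by simp, hD (hbcx.mem_of_restrict hbD)⟩
  have hy : (G.restrict (insert x (insert y D))).Adj cy y :=
    ⟨hycy.symm, hD (hbcy.mem_of_restrict hbD), by simp⟩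
  exact hx.reachable.trans (((hbcx.symm.trans hbcy).mono (restrict_mono hD)).trans hy.reachable)

/-- Induction on `A`, for a non-adjacent pair `a, b` in `A` chosen so that `a` is adjacent to all
of `A ∩ K`: let `C` be the component of `b` in `A ∖ N[a]` and `S` the neighbours of `a` adjacent to
`C`. Since `S` is a clique, a simplicial vertex of `C ∪ S` outside `S` lies in `C`; it is then
simplicial in `A`, and it avoids `K` because it is not adjacent to `a`. -/
theorem exists_isSimplicialIn_notMem (hG : Chordal G) (A : Finset (Fin p)) :
    ∀ K : Set (Fin p), G.IsClique K → ¬ (↑A ⊆ K) → ∃ v ∈ A, v ∉ K ∧ G.IsSimplicialIn A v := by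
  induction A using Finset.strongInduction with
  | H A ih =>
  classical
  intro K hK hAK
  by_cases hA : G.IsClique (A : Set (Fin p))
  · obtain ⟨w, hwA, hwK⟩ := Set.not_subset.mp hAK
    exact ⟨w, hwA, hwK, hA.subset Set.inter_subset_right⟩
  obtain ⟨a, haA, b, hbA, hab, hnab, haK⟩ := exists_not_adj_of_not_isClique hK hA
  set D : Set (Fin p) := {z | z ∈ A ∧ z ≠ a ∧ ¬ G.Adj a z}
  have hbD : b ∈ D := ⟨hbA, hab.symm, hnab⟩
  set C := A.filter fun z => (G.restrict D).Reachable b z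
  set S := A.filter fun s => G.Adj a s ∧ ∃ c ∈ C, G.Adj s c
  have hCD : ∀ c ∈ C, c ∈ D := fun c hc => (Finset.mem_filter.mp hc).2.mem_of_restrict hbD
  have hS : G.IsClique (S : Set (Fin p)) :=
    (hG.isClique_of_adj_of_reachable (fun d hd => hd.2) hbD).subset fun x hx => by
      obtain ⟨-, hax, c, hc, hxc⟩ := Finset.mem_filter.mp hx
      exact ⟨hax, c, (Finset.mem_filter.mp hc).2, hxc⟩
  have hCS : C ∪ S ⊂ A := by
    refine (Finset.ssubset_iff_of_subset (Finset.union_subset (Finset.filter_subset _ _)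
      (Finset.filter_subset _ _))).mpr ⟨a, haA, ?_⟩
    simp only [Finset.mem_union, Finset.mem_filter, not_or]
    exact ⟨fun h => (hCD a (Finset.mem_filter.mpr h)).2.1 rfl, fun h => G.loopless.irrefl _ h.2.1⟩
  have hbS : b ∉ S := fun h => hnab (Finset.mem_filter.mp h).2.1
  have hbC : b ∈ C := Finset.mem_filter.mpr ⟨hbA, .refl b⟩
  obtain ⟨v, hv, hvS, hsimp⟩ := ih (C ∪ S) hCS S hS
    fun h => hbS (by exact_mod_cast h (Finset.mem_union_left S hbC))
  have hvC : v ∈ C := (Finset.mem_union.mp hv).resolve_right hvS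
  obtain ⟨hvA, hva, hnav⟩ := hCD v hvC
  refine ⟨v, hvA, fun hvK => hnav (haK v ⟨hvA, hvK⟩ hva), hsimp.subset ?_⟩
  rintro u ⟨hvu, huA⟩
  refine ⟨hvu, ?_⟩
  by_cases huD : u ∈ D
  · exact Finset.mem_union_left S (Finset.mem_filter.mpr
      ⟨huA, (Finset.mem_filter.mp hvC).2.trans
        (show (G.restrict D).Adj v u from ⟨hvu, hCD v hvC, huD⟩).reachable⟩)
  · have hau : G.Adj a u := by
      have hua : u ≠ a := by rintro rfl; exact hnav hvu.symm
      by_contra h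
      exact huD ⟨huA, hua, h⟩
    exact Finset.mem_union_right C (Finset.mem_filter.mpr ⟨huA, hau, v, hvC, hvu.symm⟩)

theorem exists_isSimplicialIn (hG : Chordal G) {A : Finset (Fin p)} (hA : A.Nonempty) :
    ∃ v ∈ A, G.IsSimplicialIn A v := by
  obtain ⟨v, hv, -, hsimp⟩ := hG.exists_isSimplicialIn_notMem A ∅ isClique_empty
    (by simpa [Set.subset_empty_iff] using hA.ne_empty)
  exact ⟨v, hv, hsimp⟩

end Chordal

namespace Matrix

variable {n : Type*}

open scoped ComplexOrder in
theorem PosSemidef.apply_eq_zero_of_apply_self_eq_zero [Fintype n] [DecidableEq n] {𝕜 : Type*}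
    [RCLike 𝕜] {S : Matrix n n 𝕜} (hS : S.PosSemidef) {v : n} (hv : S v v = 0) (i : n) :
    S i v = 0 := by
  have h := (hS.dotProduct_mulVec_zero_iff (Pi.single v 1)).mp (by simp [hv])
  simpa using congrFun h i

/-- The rank-one term `S eᵥ eᵥᵀ S / S v v` removed from `S` by one step of symmetric Gaussian
elimination with pivot `v` (it is `0` when `S v v = 0`). -/
noncomputable def pivotTerm (S : Matrix n n ℝ) (v : n) : Matrix n n ℝ :=
  (S v v)⁻¹ • vecMulVec (fun i => S i v) (S v)

variable {S : Matrix n n ℝ}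

theorem pivotTerm_apply (v i j : n) : S.pivotTerm v i j = (S v v)⁻¹ * (S i v * S v j) := rfl

theorem sub_pivotTerm_apply_self (v : n) : (S - S.pivotTerm v) v v = 0 := by
  rw [sub_apply, pivotTerm_apply]
  rcases eq_or_ne (S v v) 0 with h | h
  · simp [h]
  · field_simp
    ring

variable [Fintype n]

theorem PosSemidef.pivotTerm (hS : S.PosSemidef) (v : n) : (S.pivotTerm v).PosSemidef := by
  have hrow : S v = fun i => S i v := funext fun i => by simpa using hS.1.apply i v
  rw [Matrix.pivotTerm, hrow]
  exact (posSemidef_vecMulVec_self_star _).smul (inv_nonneg.mpr hS.diag_nonneg)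

theorem PosSemidef.sub_pivotTerm [DecidableEq n] (hS : S.PosSemidef) (v : n) :
    (S - S.pivotTerm v).PosSemidef := by
  set P : Matrix n n ℝ := 1 - vecMulVec (Pi.single v 1) ((S v v)⁻¹ • S v)
  have hvi : ∀ i, S v i = S i v := fun i => by simpa using hS.1.apply i v
  suffices Pᴴ * S * P = S - S.pivotTerm v from this ▸ hS.conjTranspose_mul_mul_same P
  ext i j
  simp [P, Matrix.pivotTerm, sub_mul, mul_sub, Matrix.mul_apply, vecMulVec_apply, Pi.single_apply,
    Matrix.one_apply, hvi]
  rcases eq_or_ne (S v v) 0 with h | h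
  · simp [h]
  · field_simp
    ring

end Matrix

theorem Finset.sum_attach_ite_coe_eq {α M : Type*} [DecidableEq α] [AddCommMonoid M]
    (s : Finset α) (j : α) (f : s → M) :
    ∑ a ∈ s.attach, (if (a : α) = j then f a else 0) = if h : j ∈ s then f ⟨j, h⟩ else 0 := by
  split_ifs with h
  · rw [Finset.sum_eq_single_of_mem ⟨j, h⟩ (Finset.mem_attach _ _)]
    · simp
    · intro b _ hb
      rw [if_neg (fun h' => hb (Subtype.ext h'))]
  · exact Finset.sum_eq_zero fun a _ => if_neg fun h' : (a : α) = j => h (h' ▸ a.2)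

section CliqueEmbed

open Matrix

variable {p : ℕ} (β : Finset (Fin p))

theorem cliqueEmbed_zero : cliqueEmbed β 0 = 0 := by
  ext i j
  simp [cliqueEmbed]

theorem cliqueEmbed_add (X Y : Matrix β β ℝ) :
    cliqueEmbed β (X + Y) = cliqueEmbed β X + cliqueEmbed β Y := by
  ext i j
  simp only [cliqueEmbed, Matrix.add_apply]
  split_ifs <;> simp

theorem mem_of_cliqueEmbed_apply_ne_zero {Y : Matrix β β ℝ} {i j : Fin p}
    (h : cliqueEmbed β Y i j ≠ 0) : i ∈ β ∧ j ∈ β := by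
  unfold cliqueEmbed at h
  split_ifs at h with hi hj
  · exact ⟨hi, hj⟩
  all_goals exact absurd rfl h

theorem cliqueEmbed_submatrix {M : Matrix (Fin p) (Fin p) ℝ}
    (hM : ∀ i j, M i j ≠ 0 → i ∈ β ∧ j ∈ β) :
    cliqueEmbed β (M.submatrix Subtype.val Subtype.val) = M := by
  ext i j
  unfold cliqueEmbed
  split_ifs with hi hj
  · rfl
  all_goals by_contra h; have := hM i j (Ne.symm h); tauto

/-- The row-selection matrix `E_β`. -/
def cliqueSelect : Matrix β (Fin p) ℝ :=
  (1 : Matrix (Fin p) (Fin p) ℝ).submatrix Subtype.val id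

theorem cliqueEmbed_eq (Y : Matrix β β ℝ) :
    cliqueEmbed β Y = (cliqueSelect β)ᴴ * Y * cliqueSelect β := by
  ext i j
  simp [cliqueEmbed, cliqueSelect, Matrix.mul_apply, Matrix.one_apply, Finset.sum_attach_ite_coe_eq,
    eq_comm (a := i)]
  split_ifs <;> rfl

theorem Matrix.PosSemidef.cliqueEmbed {Y : Matrix β β ℝ} (hY : Y.PosSemidef) :
    (cliqueEmbed β Y).PosSemidef :=
  cliqueEmbed_eq β Y ▸ hY.conjTranspose_mul_mul_same _

end CliqueEmbed

section CliqueCone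

variable {p l : ℕ} (β : Fin l → Finset (Fin p))

def cliqueCone : AddSubmonoid (Matrix (Fin p) (Fin p) ℝ) where
  carrier := {S | ∃ St : (k : Fin l) → Matrix {a // a ∈ β k} {a // a ∈ β k} ℝ,
    (∀ k, (St k).PosSemidef) ∧ S = ∑ k, cliqueEmbed (β k) (St k)}
  add_mem' := by
    rintro _ _ ⟨X, hX, rfl⟩ ⟨Y, hY, rfl⟩
    exact ⟨X + Y, fun k => (hX k).add (hY k), by simp [cliqueEmbed_add, Finset.sum_add_distrib]⟩
  zero_mem' := ⟨0, fun _ => .zero, by simp [cliqueEmbed_zero]⟩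

theorem cliqueEmbed_mem_cliqueCone (k : Fin l) {Y : Matrix (β k) (β k) ℝ} (hY : Y.PosSemidef) :
    cliqueEmbed (β k) Y ∈ cliqueCone β := by
  refine ⟨Pi.single k Y, fun k' => ?_, ?_⟩
  · rcases eq_or_ne k' k with rfl | h
    · simpa using hY
    · simpa [h] using Matrix.PosSemidef.zero
  · rw [Finset.sum_eq_single k (fun k' _ h => by simp [h, cliqueEmbed_zero]) (by simp)]
    simp

theorem posSemidef_of_mem_cliqueCone {S : Matrix (Fin p) (Fin p) ℝ} (hS : S ∈ cliqueCone β) :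
    S.PosSemidef := by
  obtain ⟨St, hSt, rfl⟩ := hS
  exact Matrix.posSemidef_sum _ fun k _ => (hSt k).cliqueEmbed (β k)

end CliqueCone

theorem exists_mem_of_mem_cliqueCone {p l : ℕ} {β : Fin l → Finset (Fin p)}
    {S : Matrix (Fin p) (Fin p) ℝ} (hS : S ∈ cliqueCone β) {i j : Fin p} (h : S i j ≠ 0) :
    ∃ k, i ∈ β k ∧ j ∈ β k := by
  obtain ⟨St, -, rfl⟩ := hS
  rw [Matrix.sum_apply] at h
  obtain ⟨k, -, hk⟩ := Finset.exists_ne_zero_of_sum_ne_zero h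
  exact ⟨k, mem_of_cliqueEmbed_apply_ne_zero _ hk⟩

namespace Matrix

variable {V : Type*} {G : SimpleGraph V}

def SupportedOn (S : Matrix V V ℝ) (G : SimpleGraph V) (A : Set V) : Prop :=
  ∀ i j, S i j ≠ 0 → i ∈ A ∧ j ∈ A ∧ (i = j ∨ G.Adj i j)

variable {X Y : Matrix V V ℝ} {A B : Set V}

theorem SupportedOn.mono (hX : X.SupportedOn G A) (hAB : A ⊆ B) : X.SupportedOn G B :=
  fun i j h => (hX i j h).imp (@hAB i) (.imp_left (@hAB j))

theorem SupportedOn.sub (hX : X.SupportedOn G A) (hY : Y.SupportedOn G A) :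
    (X - Y).SupportedOn G A := by
  intro i j h
  by_cases hXij : X i j = 0
  · exact hY i j (by simpa [hXij] using h)
  · exact hX i j hXij

theorem SupportedOn.diff_singleton (hX : X.SupportedOn G A) {v : V} (hcol : ∀ i, X i v = 0)
    (hrow : ∀ j, X v j = 0) : X.SupportedOn G (A \ {v}) := by
  intro i j h
  obtain ⟨hi, hj, hij⟩ := hX i j h
  exact ⟨⟨hi, by rintro rfl; exact h (hrow j)⟩, ⟨hj, by rintro rfl; exact h (hcol i)⟩, hij⟩

theorem SupportedOn.of_isClique (hA : G.IsClique A) (hX : ∀ i j, X i j ≠ 0 → i ∈ A ∧ j ∈ A) :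
    X.SupportedOn G A := fun i j h => by
  obtain ⟨hi, hj⟩ := hX i j h
  exact ⟨hi, hj, (eq_or_ne i j).imp_right (hA hi hj)⟩

end Matrix

namespace Chordal

open SimpleGraph Matrix

variable {p l : ℕ} {G : SimpleGraph (Fin p)}

theorem mem_cliqueCone (hG : Chordal G) {β : Fin l → Finset (Fin p)}
    (hβ : ∀ s : Set (Fin p), G.IsClique s → ∃ k, s ⊆ β k) (A : Finset (Fin p))
    {S : Matrix (Fin p) (Fin p) ℝ} (hS : S.PosSemidef) (hSA : S.SupportedOn G A) :
    S ∈ cliqueCone β := by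
  induction A using Finset.strongInduction generalizing S with
  | H A ih =>
  rcases A.eq_empty_or_nonempty with rfl | hA
  · convert zero_mem (cliqueCone β)
    ext i j
    by_contra h
    simpa using (hSA i j h).1
  obtain ⟨v, hvA, hv⟩ := hG.exists_isSimplicialIn hA
  set C : Set (Fin p) := insert v (G.neighborSet v ∩ A)
  have hC : G.IsClique C := hv.insert fun b hb _ => hb.1
  have hCA : C ⊆ A := Set.insert_subset hvA Set.inter_subset_right
  have hcol : ∀ i, S i v ≠ 0 → i ∈ C := fun i h => by
    obtain ⟨hi, -, rfl | hiv⟩ := hSA i v h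
    · exact Set.mem_insert _ _
    · exact Or.inr ⟨hiv.symm, hi⟩
  have hM : (S.pivotTerm v).SupportedOn G C := .of_isClique hC fun i j h => by
    rw [pivotTerm_apply, ← hS.1.apply v j, star_trivial] at h
    exact ⟨hcol i fun h' => h (by simp [h']), hcol j fun h' => h (by simp [h'])⟩
  have hMcone : S.pivotTerm v ∈ cliqueCone β := by
    obtain ⟨k, hk⟩ := hβ C hC
    rw [← cliqueEmbed_submatrix (β k) fun i j h => ⟨hk (hM i j h).1, hk (hM i j h).2.1⟩]
    exact cliqueEmbed_mem_cliqueCone β k ((hS.pivotTerm v).submatrix _)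
  have hSchur := hS.sub_pivotTerm v
  have hSchur_col := hSchur.apply_eq_zero_of_apply_self_eq_zero (sub_pivotTerm_apply_self v)
  have hRest : S - S.pivotTerm v ∈ cliqueCone β := by
    refine ih (A.erase v) (Finset.erase_ssubset hvA) hSchur ?_
    rw [Finset.coe_erase]
    refine (hSA.sub (hM.mono hCA)).diff_singleton hSchur_col fun j => ?_
    rw [← hSchur.1.apply v j, hSchur_col, star_zero]
  simpa using add_mem hMcone hRest

end Chordal

theorem exists_isMaxClique_superset {p : ℕ} {G : SimpleGraph (Fin p)} {s : Set (Fin p)}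
    (hs : G.IsClique s) : ∃ t, IsMaxClique G t ∧ s ⊆ t := by
  classical
  obtain ⟨t, hst, htmax⟩ := Finite.exists_le_maximal (p := fun t : Finset (Fin p) => G.IsClique ↑t)
    (a := s.toFinset) (by simpa using hs)
  exact ⟨t, ⟨htmax.1, fun t' ht' htt' => le_antisymm htt' (htmax.2 ht' htt')⟩,
    by simpa using Finset.coe_subset.mpr hst⟩

theorem stmt13 {p l : ℕ} (V : Set (Fin p × Fin p))
    (hs : ∀ i j, (i, j) ∈ V → (j, i) ∈ V)
    (hdiag : ∀ i, (i, i) ∈ V)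
    (hchordal : Chordal (spGraph V hs))
    (β : Fin l → Finset (Fin p))
    (hcliques : ∀ k, IsMaxClique (spGraph V hs) (β k))
    (hall : ∀ s : Finset (Fin p), IsMaxClique (spGraph V hs) s → ∃ k, s = β k) :
    {S : Matrix (Fin p) (Fin p) ℝ | S.PosSemidef ∧ ∀ i j, (i, j) ∉ V → S i j = 0}
    = {S : Matrix (Fin p) (Fin p) ℝ |
        ∃ St : (k : Fin l) → Matrix {a // a ∈ β k} {a // a ∈ β k} ℝ,
          (∀ k, (St k).PosSemidef) ∧ S = ∑ k, cliqueEmbed (β k) (St k)} := by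
  have hβ : ∀ s : Set (Fin p), (spGraph V hs).IsClique s → ∃ k, s ⊆ β k := fun s hclique => by
    obtain ⟨t, ht, hst⟩ := exists_isMaxClique_superset hclique
    obtain ⟨k, rfl⟩ := hall t ht
    exact ⟨k, hst⟩
  ext S
  constructor
  · rintro ⟨hS, hSV⟩
    refine hchordal.mem_cliqueCone hβ Finset.univ hS fun i j hij => ⟨by simp, by simp, ?_⟩
    exact (eq_or_ne i j).imp_right fun hne => ⟨hne, by_contra fun hV => hij (hSV i j hV)⟩
  · intro hS
    refine ⟨posSemidef_of_mem_cliqueCone β hS, fun i j hij => by_contra fun h => ?_⟩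
    obtain ⟨k, hi, hj⟩ := exists_mem_of_mem_cliqueCone hS h
    rcases eq_or_ne i j with rfl | hne
    · exact hij (hdiag i)
    · exact hij ((hcliques k).1 hi hj hne).2
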